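/- (Correctness of the SSF fire loop, Algorithm 1 Step 2.) Fix T ∈ ℕ with T ≥ 1, θ > 0, and a constant per-step increment S ∈ ℝ. Run the loop: V₀ = 0 and for t = 1,…,T, let W = V_{t−1} + S; if W ≥ T·θ emit a spike and set V_t = W − T·θ, else set V_t = W. Then the total number of spikes emitted over the T steps equals min(T, ⌊max(0, S)/θ⌋); in particular it equals the directly computed count ⌊max(0, S)/θ⌋ clipped to [0, T], so the per-timestep loop can be replaced by a single division. -/
import Mathlib


/-- Membrane potential of the SSF fire loop (Algorithm 1, Step 2) with constant
per-step increment `S` and firing threshold `T·θ`: `V 0 = 0`, and at step `t+1`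
we let `W = V t + S`; if `W ≥ T·θ` the loop emits a spike and subtracts `T·θ`. -/
noncomputable def ssfLoopV (θ : ℝ) (T : ℕ) (S : ℝ) : ℕ → ℝ
  | 0 => 0
  | t + 1 =>
      let W := ssfLoopV θ T S t + S
      if (T : ℝ) * θ ≤ W then W - (T : ℝ) * θ else W

/-- Spike indicator of the SSF fire loop at step `t ≥ 1`. -/
noncomputable def ssfLoopSpike (θ : ℝ) (T : ℕ) (S : ℝ) (t : ℕ) : ℕ :=
  if (T : ℝ) * θ ≤ ssfLoopV θ T S (t - 1) + S then 1 else 0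

/-- Total number of spikes emitted by the SSF fire loop over the `T` steps. -/
noncomputable def ssfLoopCount (θ : ℝ) (T : ℕ) (S : ℝ) : ℕ :=
  ∑ t ∈ Finset.Icc 1 T, ssfLoopSpike θ T S t

/-- Correctness of the SSF fire loop, Algorithm 1 Step 2: the
total number of spikes emitted over the `T` steps equals
`min(T, ⌊max(0, S)/θ⌋)`, i.e. the directly computed count `⌊max(0,S)/θ⌋`
clipped to `[0, T]`, so the per-timestep loop can be replaced by one division. -/
theorem ssf_loop_correct (T : ℕ) (hT : 1 ≤ T) (θ : ℝ) (hθ : 0 < θ) (S : ℝ) :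
    (ssfLoopCount θ T S : ℤ) = min (T : ℤ) ⌊max 0 S / θ⌋ := by
  have hT0 : (0:ℝ) < (T:ℝ) := by exact_mod_cast Nat.lt_of_lt_of_le Nat.zero_lt_one hT
  have hDpos : 0 < (T:ℝ) * θ := mul_pos hT0 hθ
  rcases le_or_gt S 0 with hS | hS
  · -- no spikes ever
    have hV : ∀ t, ssfLoopV θ T S t ≤ 0 := by
      intro t
      induction t with
      | zero => simp [ssfLoopV]
      | succ t ih =>
        simp only [ssfLoopV]
        rw [if_neg (by push_neg; linarith)]
        linarith
    have hc : ssfLoopCount θ T S = 0 := by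
      apply Finset.sum_eq_zero
      intro t _
      unfold ssfLoopSpike
      rw [if_neg (by push_neg; have := hV (t - 1); linarith)]
    rw [hc, max_eq_left hS, zero_div, Int.floor_zero]
    simp
  · rcases le_or_gt ((T:ℝ) * θ) S with hSb | hSb
    · -- every step spikes
      have hV : ∀ t, 0 ≤ ssfLoopV θ T S t := by
        intro t
        induction t with
        | zero => simp [ssfLoopV]
        | succ t ih =>
          simp only [ssfLoopV]
          rw [if_pos (by linarith)]
          linarith
      have hc : ssfLoopCount θ T S = T := by
        unfold ssfLoopCount
        rw [Finset.sum_congr rfl (fun t _ => ?_), Finset.sum_const, smul_eq_mul, mul_one,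
          Nat.card_Icc]
        · simp
        · unfold ssfLoopSpike
          rw [if_pos (by have := hV (t - 1); linarith)]
      rw [hc, max_eq_right hS.le]
      have : (T:ℤ) ≤ ⌊S / θ⌋ := by
        rw [Int.le_floor]
        push_cast
        rw [le_div_iff₀ hθ]
        linarith
      omega
    · -- main case: 0 < S < T·θ
      set D : ℝ := (T:ℝ) * θ with hD
      have key : ∀ t : ℕ,
          ssfLoopV θ T S t = (t:ℝ) * S - (⌊(t:ℝ) * S / D⌋ : ℝ) * D ∧
          ((∑ i ∈ Finset.Icc 1 t, ssfLoopSpike θ T S i : ℕ) : ℤ) = ⌊(t:ℝ) * S / D⌋ := by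
        intro t
        induction t with
        | zero => simp [ssfLoopV]
        | succ t ih =>
          obtain ⟨ihV, ihC⟩ := ih
          have hfl : (⌊(t:ℝ) * S / D⌋ : ℝ) ≤ (t:ℝ) * S / D := Int.floor_le _
          have hfl' : (t:ℝ) * S / D < (⌊(t:ℝ) * S / D⌋ : ℝ) + 1 := Int.lt_floor_add_one _
          rw [div_lt_iff₀ hDpos] at hfl'
          rw [le_div_iff₀ hDpos] at hfl
          have hlb : ⌊(t:ℝ) * S / D⌋ ≤ ⌊(((t:ℕ)+1 : ℕ):ℝ) * S / D⌋ := by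
            rw [Int.le_floor]
            push_cast
            rw [le_div_iff₀ hDpos]
            nlinarith
          have hsum : ∑ i ∈ Finset.Icc 1 (t+1), ssfLoopSpike θ T S i
              = (∑ i ∈ Finset.Icc 1 t, ssfLoopSpike θ T S i) + ssfLoopSpike θ T S (t+1) :=
            Finset.sum_Icc_succ_top (Nat.one_le_iff_ne_zero.mpr (Nat.succ_ne_zero t)) _
          have hspike : ssfLoopSpike θ T S (t+1) = if D ≤ ssfLoopV θ T S t + S then 1 else 0 := by
            unfold ssfLoopSpike
            simp [hD]
          by_cases hcond : D ≤ ssfLoopV θ T S t + S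
          · -- spike
            have hub : ⌊(((t:ℕ)+1 : ℕ):ℝ) * S / D⌋ < ⌊(t:ℝ) * S / D⌋ + 2 := by
              rw [Int.floor_lt]
              push_cast
              rw [div_lt_iff₀ hDpos]
              nlinarith
            have hge : ⌊(t:ℝ) * S / D⌋ + 1 ≤ ⌊(((t:ℕ)+1 : ℕ):ℝ) * S / D⌋ := by
              rw [Int.le_floor]
              push_cast
              rw [le_div_iff₀ hDpos]
              rw [ihV] at hcond
              nlinarith
            have heq : ⌊(((t:ℕ)+1 : ℕ):ℝ) * S / D⌋ = ⌊(t:ℝ) * S / D⌋ + 1 := by omega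
            constructor
            · show ssfLoopV θ T S (t+1) = _
              simp only [ssfLoopV]
              rw [if_pos hcond]
              rw [ihV, heq]
              push_cast
              ring
            · rw [hsum, hspike, if_pos hcond, heq, Nat.cast_add, ihC]
              simp
          · -- no spike
            have hlt : ⌊(((t:ℕ)+1 : ℕ):ℝ) * S / D⌋ < ⌊(t:ℝ) * S / D⌋ + 1 := by
              rw [Int.floor_lt]
              push_cast
              rw [div_lt_iff₀ hDpos]
              rw [ihV] at hcond
              push_neg at hcond
              nlinarith
            have heq : ⌊(((t:ℕ)+1 : ℕ):ℝ) * S / D⌋ = ⌊(t:ℝ) * S / D⌋ := by omega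
            constructor
            · show ssfLoopV θ T S (t+1) = _
              simp only [ssfLoopV]
              rw [if_neg hcond]
              rw [ihV, heq]
              push_cast
              ring
            · rw [hsum, hspike, if_neg hcond, heq, Nat.cast_add, ihC]
              simp
      have hcount : (ssfLoopCount θ T S : ℤ) = ⌊(T:ℝ) * S / D⌋ := (key T).2
      have hdiv : (T:ℝ) * S / D = S / θ := by
        rw [hD]
        field_simp
      rw [hcount, hdiv, max_eq_right hS.le]
      have hlt2 : ⌊S / θ⌋ < (T:ℤ) := by
        rw [Int.floor_lt]
        push_cast
        rw [div_lt_iff₀ hθ]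
        linarith
      omega
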